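/- arXiv:1501.06865 — 2 statements merged into one kernel-verified Lean document; each statement's English description precedes it below -/
import Mathlib

section
/- Let X be a real vector space and let q₁, q₂ : X → ℝ be quadratic forms (i.e. q_i(u) = b_i(u,u) for symmetric bilinear forms b_i on X). For a quadratic form q on X define ν(q) ∈ ℕ ∪ {∞} as the supremum of dimensions of finite-dimensional subspaces F ⊆ X such that q(u) < 0 for every nonzero u ∈ F. Then ν(q₁ + q₂) ≤ ν(q₁) + ν(q₂). -/
/-!
Let `F` be a finite-dimensional subspace on which `q₁ + q₂` is negative definite. Diagonalising
`b₁` on `F` splits `F` into a subspace on which `q₁` is negative definite and a complement on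
which `q₁ ≥ 0`; on that complement `q₂` must be negative definite, so `dim F ≤ ν(q₁) + ν(q₂)`.
-/

noncomputable section

-- `finrank` is `0` on an infinite-dimensional subspace, so only finite-dimensional `F` contribute.
noncomputable def negIdx {X : Type*} [AddCommGroup X] [Module ℝ X] (q : X → ℝ) : ℕ∞ :=
  ⨆ F : {F : Submodule ℝ X // ∀ u ∈ F, u ≠ 0 → q u < 0},
    (Module.finrank ℝ F.1 : ℕ∞)

open Module Submodule Function

namespace LinearMap.BilinForm

theorem apply_self_eq_sum_of_isOrthoᵢ {R M ι : Type*} [CommRing R] [AddCommGroup M] [Module R M]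
    [Fintype ι] {B : LinearMap.BilinForm R M} {v : Basis ι R M} (hv : B.IsOrthoᵢ v) (w : M) :
    B w w = ∑ i, v.repr w i * v.repr w i * B (v i) (v i) := by
  conv_lhs => rw [← v.sum_repr w]
  simp only [map_sum, LinearMap.sum_apply, map_smul, LinearMap.smul_apply, smul_eq_mul]
  refine Finset.sum_congr rfl fun i _ => ?_
  rw [Finset.sum_eq_single i (fun j _ hji => by rw [hv hji]; ring) (by simp)]
  ring

theorem exists_isCompl_negDef_nonneg {V : Type*} [AddCommGroup V] [Module ℝ V]
    [FiniteDimensional ℝ V] {B : LinearMap.BilinForm ℝ V} (hB : B.IsSymm) :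
    ∃ N P : Submodule ℝ V, IsCompl N P ∧ (∀ u ∈ N, u ≠ 0 → B u u < 0) ∧ ∀ u ∈ P, 0 ≤ B u u := by
  obtain ⟨v, hv⟩ := exists_orthogonal_basis (isSymm_iff.mp hB)
  set s : Set (Fin (finrank ℝ V)) := {i | B (v i) (v i) < 0}
  refine ⟨span ℝ (v '' s), span ℝ (v '' sᶜ),
    v.linearIndependent.isCompl_span_image v.span_eq isCompl_compl, ?_, ?_⟩
  · intro u hu hu0
    have hsupp := v.mem_span_image.mp hu
    obtain ⟨i, hi⟩ : ∃ i, v.repr u i ≠ 0 := by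
      by_contra! h
      exact hu0 (v.repr.injective (Finsupp.ext fun i => by simp [h i]))
    rw [apply_self_eq_sum_of_isOrthoᵢ hv]
    refine Finset.sum_neg' (fun j _ => ?_) ⟨i, Finset.mem_univ _,
      mul_neg_of_pos_of_neg (mul_self_pos.2 hi) (hsupp (Finsupp.mem_support_iff.2 hi))⟩
    by_cases hj : v.repr u j = 0
    · simp [hj]
    · exact mul_nonpos_of_nonneg_of_nonpos (mul_self_nonneg _)
        (hsupp (Finsupp.mem_support_iff.2 hj)).le
  · intro u hu
    have hsupp := v.mem_span_image.mp hu
    rw [apply_self_eq_sum_of_isOrthoᵢ hv]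
    refine Finset.sum_nonneg fun j _ => ?_
    by_cases hj : v.repr u j = 0
    · simp [hj]
    · exact mul_nonneg (mul_self_nonneg _) (not_lt.1 (hsupp (Finsupp.mem_support_iff.2 hj)))

end LinearMap.BilinForm

section NegIdx

variable {X : Type*} [AddCommGroup X] [Module ℝ X]

theorem le_negIdx (q : X → ℝ) {F : Submodule ℝ X} (hF : ∀ u ∈ F, u ≠ 0 → q u < 0) :
    (finrank ℝ F : ℕ∞) ≤ negIdx q :=
  le_iSup (fun F : {F : Submodule ℝ X // ∀ u ∈ F, u ≠ 0 → q u < 0} => (finrank ℝ F.1 : ℕ∞))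
    ⟨F, hF⟩

theorem negIdx_comp_le {Y : Type*} [AddCommGroup Y] [Module ℝ Y] (q : X → ℝ) {f : Y →ₗ[ℝ] X}
    (hf : Injective f) : negIdx (q ∘ f) ≤ negIdx q := by
  refine iSup_le fun ⟨N, hN⟩ => ?_
  dsimp only
  rw [(N.equivMapOfInjective f hf).finrank_eq]
  refine le_negIdx q ?_
  rintro _ ⟨w, hw, rfl⟩ hw0
  exact hN w hw (by rintro rfl; simp at hw0)

theorem finrank_le_negIdx_add_negIdx [FiniteDimensional ℝ X] {B : LinearMap.BilinForm ℝ X}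
    (hB : B.IsSymm) (q : X → ℝ) (h : ∀ u, u ≠ 0 → B u u + q u < 0) :
    (finrank ℝ X : ℕ∞) ≤ negIdx (fun u => B u u) + negIdx q := by
  obtain ⟨N, P, hNP, hN, hP⟩ := LinearMap.BilinForm.exists_isCompl_negDef_nonneg hB
  rw [← Submodule.finrank_add_eq_of_isCompl hNP, Nat.cast_add]
  exact add_le_add (le_negIdx _ hN)
    (le_negIdx q fun u hu hu0 => by linarith [hP u hu, h u hu0])

end NegIdx

theorem negIdx_add_le_general {X : Type*} [AddCommGroup X] [Module ℝ X]
    (b₁ b₂ : X →ₗ[ℝ] X →ₗ[ℝ] ℝ)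
    (h₁ : ∀ u v, b₁ u v = b₁ v u) :
    negIdx (fun u => b₁ u u + b₂ u u) ≤
      negIdx (fun u => b₁ u u) + negIdx (fun u => b₂ u u) := by
  refine iSup_le fun ⟨F, hF⟩ => ?_
  by_cases hfin : FiniteDimensional ℝ F
  · have hsymm : (LinearMap.BilinForm.restrict b₁ F).IsSymm :=
      (LinearMap.BilinForm.isSymm_def.mpr h₁).restrict F
    calc (finrank ℝ F : ℕ∞)
        ≤ negIdx ((fun u => b₁ u u) ∘ F.subtype) + negIdx ((fun u => b₂ u u) ∘ F.subtype) :=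
          finrank_le_negIdx_add_negIdx hsymm _ fun u hu => hF u u.2 (by simpa using hu)
      _ ≤ _ := add_le_add (negIdx_comp_le _ F.injective_subtype)
          (negIdx_comp_le _ F.injective_subtype)
  · simp [finrank_of_infinite_dimensional hfin]

/-- Subadditivity of the negative index: `ν(q₁ + q₂) ≤ ν(q₁) + ν(q₂)`. -/
theorem negIdx_add_le {X : Type*} [AddCommGroup X] [Module ℝ X]
    (b₁ b₂ : X →ₗ[ℝ] X →ₗ[ℝ] ℝ)
    (h₁ : ∀ u v, b₁ u v = b₁ v u) (h₂ : ∀ u v, b₂ u v = b₂ v u) :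
    negIdx (fun u => b₁ u u + b₂ u u) ≤
      negIdx (fun u => b₁ u u) + negIdx (fun u => b₂ u u) :=
  negIdx_add_le_general b₁ b₂ h₁

end
end

section
/- Let d ≥ 1 and ρ ∈ (0,2). Let V : ℝ^d → ℝ be measurable, and assume there exist constants C, C', R ∈ (0,∞) such that |V(x)| ≤ C(1+|x|)^{-ρ} for all x ∈ ℝ^d and V(x) ≤ -C'|x|^{-ρ} for all |x| ≥ R. Then there exist constants c₁, c₂ ∈ (0,∞) and E₀ < 0 such that for all E ∈ (E₀, 0): c₁|E|^{d(1/2 - 1/ρ)} ≤ ∫_{ℝ^d} (V(x) - E)_-^{d/2} dx ≤ c₂|E|^{d(1/2 - 1/ρ)}. -/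
/-!
For `E < 0` the integrand `(V - E)_-^γ` vanishes outside the ball of radius `(C / |E|)^{1/ρ}`, and
inside it is at most `(C (1 + |x|)^{-ρ})^γ`; integrating in polar coordinates bounds the integral by
a multiple of `|E|^{γ - d/ρ}` as long as `ργ < d` (for `γ = d/2` this is `ρ < 2`). Conversely, on
the annulus `r/2 < |x| ≤ r` with `r = (C' / (2|E|))^{1/ρ}` we have `V ≤ -2|E|`, so the integrand
is at least `|E|^γ` on a set of measure comparable to `r^d`, which is again of order `|E|^{-d/ρ}`.
This needs `R ≤ r/2`, that is, `|E|` small.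
-/

open MeasureTheory Filter Real Set Topology

noncomputable section

abbrev Ed (d : ℕ) := EuclideanSpace ℝ (Fin d)

open Metric Module

theorem Real.rpow_inv_rpow_neg {a ρ : ℝ} (ha : 0 ≤ a) (hρ : ρ ≠ 0) :
    (a ^ ρ⁻¹) ^ (-ρ) = a⁻¹ := by
  rw [rpow_neg (rpow_nonneg ha _), rpow_inv_rpow ha hρ]

theorem Real.div_rpow_inv_rpow {a b : ℝ} (ha : 0 ≤ a) (hb : 0 ≤ b) (ρ t : ℝ) :
    ((a / b) ^ ρ⁻¹) ^ t = a ^ (t / ρ) * b ^ (-(t / ρ)) := by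
  rw [← rpow_mul (div_nonneg ha hb), div_rpow ha hb, rpow_neg hb, div_eq_mul_inv, inv_mul_eq_div]

section

variable {X : Type*} [NormedAddCommGroup X] {V : X → ℝ} {C ρ γ E : ℝ}

theorem max_sub_rpow_le_indicator (hC : 0 < C) (hρ : 0 < ρ) (hγ : 0 < γ) (hE : E < 0)
    (hbd : ∀ x, |V x| ≤ C * (1 + ‖x‖) ^ (-ρ)) (x : X) :
    max (E - V x) 0 ^ γ ≤
      C ^ γ * (closedBall 0 ((C / |E|) ^ ρ⁻¹)).indicator (fun y ↦ (1 + ‖y‖) ^ (-(ρ * γ))) x := by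
  by_cases hx : ‖x‖ ≤ (C / |E|) ^ ρ⁻¹
  · rw [indicator_of_mem (mem_closedBall_zero_iff.2 hx), ← neg_mul, rpow_mul (by positivity),
      ← mul_rpow hC.le (by positivity)]
    refine rpow_le_rpow (le_max_right _ _) (max_le ?_ (by positivity)) hγ.le
    linarith [neg_abs_le (V x), hbd x]
  · push Not at hx
    have hE' : 0 < |E| := abs_pos.2 hE.ne
    have hdecay : C * (1 + ‖x‖) ^ (-ρ) ≤ |E| := by
      have hs : 0 < (C / |E|) ^ ρ⁻¹ := rpow_pos_of_pos (div_pos hC hE') _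
      calc C * (1 + ‖x‖) ^ (-ρ) ≤ C * ((C / |E|) ^ ρ⁻¹) ^ (-ρ) :=
            mul_le_mul_of_nonneg_left (rpow_le_rpow_of_nonpos hs (by linarith) (by linarith)) hC.le
        _ = |E| := by rw [rpow_inv_rpow_neg (by positivity) hρ.ne']; field_simp
    have hVx : E ≤ V x := by linarith [neg_abs_le (V x), hbd x, abs_of_neg hE]
    rw [max_eq_right (by linarith), zero_rpow hγ.ne', indicator_of_notMem (by simpa using hx),
      mul_zero]

variable [NormedSpace ℝ X] [FiniteDimensional ℝ X] [MeasurableSpace X] [BorelSpace X]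
  (μ : Measure X) [μ.IsAddHaarMeasure]

theorem setIntegral_closedBall_one_add_norm_rpow_neg_le [Nontrivial X] {a s : ℝ} (ha : 0 ≤ a)
    (had : a < finrank ℝ X) (hs : 0 < s) :
    ∫ x in closedBall (0 : X) s, (1 + ‖x‖) ^ (-a) ∂μ ≤
      finrank ℝ X * μ.real (ball 0 1) * (s ^ (finrank ℝ X - a) / (finrank ℝ X - a)) := by
  set d := finrank ℝ X
  set f : ℝ → ℝ := (Icc 0 s).indicator fun y ↦ (1 + y) ^ (-a)
  have hf : ∀ y, 0 ≤ y → 0 ≤ y ^ (d - 1) • f y := fun y hy ↦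
    smul_nonneg (pow_nonneg hy _) (indicator_nonneg (fun y hy ↦ by have := hy.1; positivity) _)
  have hdom : ∀ y ∈ Ioi (0 : ℝ),
      y ^ (d - 1) • f y ≤ (Ioc 0 s).indicator (· ^ ((d : ℝ) - a - 1)) y := by
    intro y (hy : 0 < y)
    by_cases hys : y ≤ s
    · have hd : ((d - 1 : ℕ) : ℝ) = d - 1 := by
        rw [Nat.cast_sub finrank_pos, Nat.cast_one]
      simp only [f]
      rw [indicator_of_mem (show y ∈ Ioc 0 s from ⟨hy, hys⟩),
        indicator_of_mem (show y ∈ Icc 0 s from ⟨hy.le, hys⟩), smul_eq_mul, ← rpow_natCast, hd]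
      calc y ^ ((d : ℝ) - 1) * (1 + y) ^ (-a) ≤ y ^ ((d : ℝ) - 1) * y ^ (-a) := by
            refine mul_le_mul_of_nonneg_left ?_ (by positivity)
            exact rpow_le_rpow_of_nonpos hy (by linarith) (neg_nonpos.2 ha)
        _ = y ^ ((d : ℝ) - a - 1) := by rw [← rpow_add hy]; ring_nf
    · simp only [f]
      rw [indicator_of_notMem (fun h ↦ hys h.2), indicator_of_notMem (fun h ↦ hys h.2), smul_zero]
  have hint : IntegrableOn (· ^ ((d : ℝ) - a - 1)) (Ioc 0 s) := by
    refine (intervalIntegrable_iff_integrableOn_Ioc_of_le hs.le).1 ?_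
    exact intervalIntegral.intervalIntegrable_rpow' (by linarith)
  calc ∫ x in closedBall (0 : X) s, (1 + ‖x‖) ^ (-a) ∂μ = ∫ x, f ‖x‖ ∂μ := by
        rw [← integral_indicator measurableSet_closedBall]
        congr 1 with x
        simp [f, indicator]
    _ = d * μ.real (ball 0 1) * ∫ y in Ioi (0 : ℝ), y ^ (d - 1) • f y := by
        rw [integral_fun_norm_addHaar, nsmul_eq_mul, smul_eq_mul, mul_assoc]
    _ ≤ d * μ.real (ball 0 1) *
          ∫ y in Ioi (0 : ℝ), (Ioc 0 s).indicator (· ^ ((d : ℝ) - a - 1)) y := by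
        refine mul_le_mul_of_nonneg_left ?_ (by positivity)
        refine integral_mono_of_nonneg ?_ ?_ ?_
        · exact (ae_restrict_iff' measurableSet_Ioi).2 (ae_of_all _ fun y hy ↦ hf y (le_of_lt hy))
        · exact (hint.integrable_indicator measurableSet_Ioc).integrableOn
        · exact (ae_restrict_iff' measurableSet_Ioi).2 (ae_of_all _ hdom)
    _ = d * μ.real (ball 0 1) * (s ^ ((d : ℝ) - a) / (d - a)) := by
        rw [setIntegral_indicator measurableSet_Ioc,
          inter_eq_self_of_subset_right Ioc_subset_Ioi_self,
          ← intervalIntegral.integral_of_le hs.le, integral_rpow (Or.inl (by linarith)), sub_add_cancel, zero_rpow (by linarith), sub_zero]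

theorem integrable_indicator_closedBall_one_add_norm_rpow (s a : ℝ) :
    Integrable ((closedBall (0 : X) s).indicator fun x ↦ (1 + ‖x‖) ^ a) μ := by
  have hcont : Continuous fun x : X ↦ (1 + ‖x‖) ^ a :=
    (continuous_const.add continuous_norm).rpow_const fun x ↦
      Or.inl (by positivity : (0 : ℝ) < 1 + ‖x‖).ne'
  exact (hcont.continuousOn.integrableOn_compact (isCompact_closedBall _ _)).integrable_indicator
    measurableSet_closedBall

theorem integrable_max_sub_rpow (hV : Measurable V) (hC : 0 < C) (hρ : 0 < ρ) (hγ : 0 < γ)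
    (hE : E < 0) (hbd : ∀ x, |V x| ≤ C * (1 + ‖x‖) ^ (-ρ)) :
    Integrable (fun x ↦ max (E - V x) 0 ^ γ) μ := by
  refine ((integrable_indicator_closedBall_one_add_norm_rpow μ ((C / |E|) ^ ρ⁻¹)
    (-(ρ * γ))).const_mul (C ^ γ)).mono' ?_ (ae_of_all _ fun x ↦ ?_)
  · exact ((measurable_const.sub hV).max measurable_const).pow_const γ |>.aestronglyMeasurable
  · rw [norm_of_nonneg (by positivity)]
    exact max_sub_rpow_le_indicator hC hρ hγ hE hbd x

theorem integral_max_sub_rpow_le [Nontrivial X] (hC : 0 < C) (hρ : 0 < ρ) (hγ : 0 < γ)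
    (hργ : ρ * γ < finrank ℝ X) (hE : E < 0) (hbd : ∀ x, |V x| ≤ C * (1 + ‖x‖) ^ (-ρ)) :
    ∫ x, max (E - V x) 0 ^ γ ∂μ ≤
      finrank ℝ X * μ.real (ball 0 1) * C ^ (finrank ℝ X / ρ) / (finrank ℝ X - ρ * γ) *
        |E| ^ (γ - finrank ℝ X / ρ) := by
  set d := (finrank ℝ X : ℝ)
  set s := (C / |E|) ^ ρ⁻¹
  have hE' : 0 < |E| := abs_pos.2 hE.ne
  have hs : 0 < s := rpow_pos_of_pos (div_pos hC hE') _
  calc ∫ x, max (E - V x) 0 ^ γ ∂μ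
      ≤ ∫ x, C ^ γ * (closedBall 0 s).indicator (fun y ↦ (1 + ‖y‖) ^ (-(ρ * γ))) x ∂μ :=
        integral_mono_of_nonneg (ae_of_all _ fun x ↦ by positivity)
          ((integrable_indicator_closedBall_one_add_norm_rpow μ _ _).const_mul _)
          (ae_of_all _ (max_sub_rpow_le_indicator hC hρ hγ hE hbd))
    _ = C ^ γ * ∫ x in closedBall 0 s, (1 + ‖x‖) ^ (-(ρ * γ)) ∂μ := by
        rw [integral_const_mul, integral_indicator measurableSet_closedBall]
    _ ≤ C ^ γ * (d * μ.real (ball 0 1) * (s ^ (d - ρ * γ) / (d - ρ * γ))) :=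
        mul_le_mul_of_nonneg_left (setIntegral_closedBall_one_add_norm_rpow_neg_le μ
          (by positivity) hργ hs) (by positivity)
    _ = d * μ.real (ball 0 1) * C ^ (d / ρ) / (d - ρ * γ) * |E| ^ (γ - d / ρ) := by
        have hexp : (d - ρ * γ) / ρ = d / ρ - γ := by field_simp
        rw [div_rpow_inv_rpow hC.le hE'.le, hexp, neg_sub, rpow_sub hC]
        field_simp

theorem measureReal_closedBall_sdiff_closedBall_half [Nontrivial X] {r : ℝ} (hr : 0 ≤ r) :
    r ^ finrank ℝ X * μ.real (ball 0 1) / 2 ≤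
      μ.real (closedBall (0 : X) r \ closedBall 0 (r / 2)) := by
  rw [measureReal_sdiff (closedBall_subset_closedBall (by linarith)) measurableSet_closedBall
      measure_closedBall_lt_top.ne, Measure.addHaar_real_closedBall μ _ hr,
    Measure.addHaar_real_closedBall μ _ (by linarith), div_pow]
  have h2 : r ^ finrank ℝ X / 2 ^ finrank ℝ X ≤ r ^ finrank ℝ X / 2 :=
    div_le_div_of_nonneg_left (by positivity) two_pos (le_self_pow₀ one_le_two finrank_pos.ne')
  nlinarith [measureReal_nonneg (μ := μ) (s := ball 0 1)]

theorem le_integral_max_sub_rpow [Nontrivial X] {C' R : ℝ} (hρ : 0 < ρ) (hγ : 0 ≤ γ)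
    (hC' : 0 < C') (hE : E < 0) (hneg : ∀ x, R ≤ ‖x‖ → V x ≤ -C' * ‖x‖ ^ (-ρ))
    (hR : 2 * R ≤ (C' / 2 / |E|) ^ ρ⁻¹) (hint : Integrable (fun x ↦ max (E - V x) 0 ^ γ) μ) :
    μ.real (ball 0 1) / 2 * (C' / 2) ^ (finrank ℝ X / ρ) * |E| ^ (γ - finrank ℝ X / ρ) ≤
      ∫ x, max (E - V x) 0 ^ γ ∂μ := by
  set r := (C' / 2 / |E|) ^ ρ⁻¹
  set A := closedBall (0 : X) r \ closedBall 0 (r / 2)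
  have hE' : 0 < |E| := abs_pos.2 hE.ne
  have hr : 0 < r := rpow_pos_of_pos (div_pos (half_pos hC') hE') _
  have hA : MeasurableSet A := measurableSet_closedBall.diff measurableSet_closedBall
  have hlow : ∀ x ∈ A, |E| ^ γ ≤ max (E - V x) 0 ^ γ := by
    rintro x ⟨hxr, hxr2⟩
    rw [mem_closedBall_zero_iff] at hxr
    rw [mem_closedBall_zero_iff, not_le] at hxr2
    have hdecay : r ^ (-ρ) ≤ ‖x‖ ^ (-ρ) :=
      rpow_le_rpow_of_nonpos (by linarith) hxr (by linarith)
    have hr_ρ : C' * r ^ (-ρ) = 2 * |E| := by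
      rw [rpow_inv_rpow_neg (by positivity) hρ.ne']
      field_simp
    have hVx : V x ≤ -(2 * |E|) := calc
      V x ≤ -C' * ‖x‖ ^ (-ρ) := hneg x (by linarith)
      _ ≤ -C' * r ^ (-ρ) := mul_le_mul_of_nonpos_left hdecay (by linarith)
      _ = -(2 * |E|) := by rw [neg_mul, hr_ρ]
    refine rpow_le_rpow hE'.le (le_max_of_le_left ?_) hγ
    linarith [abs_of_neg hE]
  calc μ.real (ball 0 1) / 2 * (C' / 2) ^ (finrank ℝ X / ρ) * |E| ^ (γ - finrank ℝ X / ρ)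
      = |E| ^ γ * (r ^ finrank ℝ X * μ.real (ball 0 1) / 2) := by
        rw [← rpow_natCast, div_rpow_inv_rpow (half_pos hC').le hE'.le, rpow_sub hE',
          rpow_neg hE'.le]
        field_simp
    _ ≤ |E| ^ γ * μ.real A :=
        mul_le_mul_of_nonneg_left (measureReal_closedBall_sdiff_closedBall_half μ hr.le)
          (by positivity)
    _ = ∫ x, A.indicator (fun _ ↦ |E| ^ γ) x ∂μ := by
        rw [integral_indicator_const _ hA, smul_eq_mul, mul_comm]
    _ ≤ ∫ x, max (E - V x) 0 ^ γ ∂μ := by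
        have hAfin : μ A ≠ ⊤ := ((measure_mono sdiff_subset).trans_lt measure_closedBall_lt_top).ne
        exact integral_mono ((integrableOn_const (C := |E| ^ γ) hAfin).integrable_indicator hA) hint
            (indicator_le' hlow fun x _ ↦ by positivity)

end

/-- Two-sided estimate of the semiclassical phase-space integral `∫ (V - E)_-^{d/2} dx` for a
regularly decaying negative potential, `ρ ∈ (0,2)`. -/
theorem semiclassical_integral_two_sided_estimate
    (d : ℕ) (hd : 1 ≤ d) (ρ : ℝ) (hρ : ρ ∈ Set.Ioo (0 : ℝ) 2)
    (V : Ed d → ℝ) (hVmeas : Measurable V)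
    (C C' R : ℝ) (hC : 0 < C) (hC' : 0 < C') (hR : 0 < R)
    (hbd : ∀ x : Ed d, |V x| ≤ C * (1 + ‖x‖) ^ (-ρ))
    (hneg : ∀ x : Ed d, R ≤ ‖x‖ → V x ≤ -C' * ‖x‖ ^ (-ρ)) :
    ∃ c₁ c₂ : ℝ, 0 < c₁ ∧ 0 < c₂ ∧ ∃ E₀ : ℝ, E₀ < 0 ∧ ∀ E ∈ Set.Ioo E₀ (0 : ℝ),
      c₁ * |E| ^ ((d : ℝ) * (1 / 2 - 1 / ρ)) ≤
        (∫ x, (max (E - V x) 0) ^ ((d : ℝ) / 2)) ∧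
      (∫ x, (max (E - V x) 0) ^ ((d : ℝ) / 2)) ≤
        c₂ * |E| ^ ((d : ℝ) * (1 / 2 - 1 / ρ)) := by
  obtain ⟨hρ, hρ2⟩ := hρ
  have : Nonempty (Fin d) := ⟨⟨0, hd⟩⟩
  have hB : 0 < volume.real (ball (0 : Ed d) 1) :=
    ENNReal.toReal_pos (measure_ball_pos _ _ one_pos).ne' measure_ball_lt_top.ne
  have hργ : ρ * (d / 2) < d := by nlinarith [(Nat.one_le_cast (α := ℝ)).2 hd]
  have hexp : (d : ℝ) * (1 / 2 - 1 / ρ) = d / 2 - d / ρ := by ring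
  refine ⟨volume.real (ball (0 : Ed d) 1) / 2 * (C' / 2) ^ (d / ρ : ℝ),
    d * volume.real (ball (0 : Ed d) 1) * C ^ (d / ρ : ℝ) / (d - ρ * (d / 2)), by positivity,
    div_pos (by positivity) (by linarith), -(C' / 2 / (2 * R) ^ ρ), neg_lt_zero.2 (by positivity),
    ?_⟩
  rintro E ⟨hE₀, hE⟩
  have hE' : 0 < |E| := abs_pos.2 hE.ne
  have h2R : 2 * R ≤ (C' / 2 / |E|) ^ ρ⁻¹ := by
    rw [le_rpow_inv_iff_of_pos (by positivity) (by positivity) hρ, le_div_iff₀ hE', mul_comm,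
      ← le_div_iff₀ (by positivity), abs_of_neg hE]
    linarith
  have hint := integrable_max_sub_rpow volume hVmeas hC hρ (γ := d / 2) (by positivity) hE hbd
  rw [hexp]
  constructor
  · simpa using le_integral_max_sub_rpow volume hρ (by positivity) hC' hE hneg h2R hint
  · simpa using integral_max_sub_rpow_le volume hC hρ (by positivity) (by simpa using hργ) hE hbd
end
end
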